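/- There exists a universal constant B > 0 such that, for any multi-source setup as described, the empirical Gram matrix satisfies E[‖K̂ − K‖₂²] ≤ C²·(8M/n̄ + B/n̄²), where the expectation is over the M mutually independent datasets. -/

import Mathlib

open MeasureTheory

noncomputable def empEmb {Ξ H : Type*} [NormedAddCommGroup H] [InnerProductSpace ℝ H]
    (φ : Ξ → H) {n : ℕ} (x : Fin n → Ξ) : H := (n : ℝ)⁻¹ • ∑ j, φ (x j)

noncomputable def gram {H : Type*} [NormedAddCommGroup H] [InnerProductSpace ℝ H]
    {m : ℕ} (μ : Fin m → H) : Matrix (Fin m) (Fin m) ℝ :=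
  Matrix.of fun i j => (inner ℝ (μ i) (μ j) : ℝ)

noncomputable def spectralNorm2 {m : ℕ} (A : Matrix (Fin m) (Fin m) ℝ) : ℝ :=
  ‖Matrix.toEuclideanCLM (𝕜 := ℝ) A‖

/-! The spectral norm is dominated by the Frobenius norm, and each entry of `K̂ - K` obeys
`(⟪μ̂ᵢ, μ̂ⱼ⟫ - ⟪μᵢ, μⱼ⟫)² ≤ 2C‖μ̂ᵢ - μᵢ‖² + 2C‖μ̂ⱼ - μⱼ‖²`, so that pointwise
`‖K̂ - K‖₂² ≤ 4CM ∑ᵢ ‖μ̂ᵢ - μᵢ‖²`. By independence the cross terms of `‖μ̂ᵢ - μᵢ‖²` have zero mean,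
whence `E‖μ̂ᵢ - μᵢ‖² ≤ C / nᵢ` and `E‖K̂ - K‖₂² ≤ 4C²M / n̄`, which lies below the claimed bound
for every `B > 0`. -/

open ProbabilityTheory RealInnerProductSpace

theorem spectralNorm2_sq_le_sum_sq {m : ℕ} (A : Matrix (Fin m) (Fin m) ℝ) :
    spectralNorm2 A ^ 2 ≤ ∑ i, ∑ j, A i j ^ 2 := by
  have hS : 0 ≤ ∑ i, ∑ j, A i j ^ 2 := by positivity
  suffices spectralNorm2 A ≤ √(∑ i, ∑ j, A i j ^ 2) from
    (pow_le_pow_left₀ (norm_nonneg _) this 2).trans (Real.sq_sqrt hS).le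
  refine ContinuousLinearMap.opNorm_le_bound _ (Real.sqrt_nonneg _) fun x => ?_
  rw [← Real.sqrt_sq (norm_nonneg x), ← Real.sqrt_mul hS,
    Real.le_sqrt (norm_nonneg _) (by positivity)]
  calc ‖Matrix.toEuclideanCLM (𝕜 := ℝ) A x‖ ^ 2 = ∑ i, (∑ j, A i j * x j) ^ 2 := by
        simp [EuclideanSpace.norm_sq_eq, Matrix.ofLp_toEuclideanCLM, Matrix.mulVec, dotProduct]
    _ ≤ ∑ i, (∑ j, A i j ^ 2) * ∑ j, x j ^ 2 :=
        Finset.sum_le_sum fun i _ => Finset.sum_mul_sq_le_sq_mul_sq _ _ _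
    _ = (∑ i, ∑ j, A i j ^ 2) * ‖x‖ ^ 2 := by simp [Finset.sum_mul, EuclideanSpace.norm_sq_eq]

section InnerProductSpace

variable {H : Type*} [NormedAddCommGroup H] [InnerProductSpace ℝ H]

theorem real_inner_sq_le (x y : H) : ⟪x, y⟫ ^ 2 ≤ ‖x‖ ^ 2 * ‖y‖ ^ 2 := by
  simpa only [sq, real_inner_self_eq_norm_mul_norm, mul_mul_mul_comm] using
    real_inner_mul_inner_self_le x y

theorem inner_sub_inner_sq_le {C : ℝ} {a b c d : H} (hb : ‖b‖ ^ 2 ≤ C) (hc : ‖c‖ ^ 2 ≤ C) :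
    (⟪a, b⟫ - ⟪c, d⟫) ^ 2 ≤ 2 * C * ‖a - c‖ ^ 2 + 2 * C * ‖b - d‖ ^ 2 := by
  have hsplit : ⟪a, b⟫ - ⟪c, d⟫ = ⟪a - c, b⟫ + ⟪c, b - d⟫ := by
    rw [inner_sub_left, inner_sub_right]; ring
  have h₁ : ⟪a - c, b⟫ ^ 2 ≤ ‖a - c‖ ^ 2 * C :=
    (real_inner_sq_le _ _).trans (mul_le_mul_of_nonneg_left hb (by positivity))
  have h₂ : ⟪c, b - d⟫ ^ 2 ≤ C * ‖b - d‖ ^ 2 :=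
    (real_inner_sq_le _ _).trans (mul_le_mul_of_nonneg_right hc (by positivity))
  rw [hsplit]
  linarith [add_sq_le (a := ⟪a - c, b⟫) (b := ⟪c, b - d⟫)]

theorem spectralNorm2_gram_sub_sq_le {m : ℕ} {C : ℝ} {u v : Fin m → H}
    (hu : ∀ i, ‖u i‖ ^ 2 ≤ C) (hv : ∀ i, ‖v i‖ ^ 2 ≤ C) :
    spectralNorm2 (gram u - gram v) ^ 2 ≤ 4 * C * m * ∑ i, ‖u i - v i‖ ^ 2 :=
  calc spectralNorm2 (gram u - gram v) ^ 2 ≤ ∑ i, ∑ j, (gram u - gram v) i j ^ 2 :=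
        spectralNorm2_sq_le_sum_sq _
    _ ≤ ∑ i, ∑ j, (2 * C * ‖u i - v i‖ ^ 2 + 2 * C * ‖u j - v j‖ ^ 2) :=
        Finset.sum_le_sum fun i _ => Finset.sum_le_sum fun j _ =>
          inner_sub_inner_sq_le (hu j) (hv i)
    _ = 4 * C * m * ∑ i, ‖u i - v i‖ ^ 2 := by
        simp only [Finset.sum_add_distrib, Finset.sum_const, Finset.card_univ, Fintype.card_fin,
          nsmul_eq_mul, ← Finset.mul_sum]
        ring

theorem norm_empEmb_le {Ξ : Type*} {φ : Ξ → H} {s : ℝ} (hs : 0 ≤ s) (hφ : ∀ ξ, ‖φ ξ‖ ≤ s)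
    {n : ℕ} (x : Fin n → Ξ) : ‖empEmb φ x‖ ≤ s := by
  rcases n.eq_zero_or_pos with rfl | hn
  · simpa [empEmb] using hs
  have hsum : ‖∑ j, φ (x j)‖ ≤ n * s := (norm_sum_le _ _).trans <| by
    simpa using Finset.sum_le_card_nsmul Finset.univ _ s fun j _ => hφ (x j)
  calc ‖empEmb φ x‖ = (n : ℝ)⁻¹ * ‖∑ j, φ (x j)‖ := by
        rw [empEmb, norm_smul, norm_inv, Real.norm_natCast]
    _ ≤ (n : ℝ)⁻¹ * (n * s) := by gcongr
    _ = s := by field_simp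

theorem MeasureTheory.MemLp.integrable_inner {α : Type*} [MeasurableSpace α] {μ : Measure α}
    {f g : α → H} (hf : MemLp f 2 μ) (hg : MemLp g 2 μ) : Integrable (fun a => ⟪f a, g a⟫) μ :=
  memLp_one_iff_integrable.1 <| hf.of_bilin (fun x y => ⟪x, y⟫) 1 hg (hf.1.inner hg.1) <|
    ae_of_all _ fun a => by simpa using nnnorm_inner_le_nnnorm (𝕜 := ℝ) (f a) (g a)

theorem memLp_empEmb {Ξ : Type*} [MeasurableSpace Ξ] {P : Measure Ξ} [IsProbabilityMeasure P]
    {φ : Ξ → H} {p : ENNReal} (hφ : MemLp φ p P) (n : ℕ) :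
    MemLp (empEmb φ) p (Measure.pi fun _ : Fin n => P) :=
  (memLp_finsetSum Finset.univ fun j _ =>
    hφ.comp_measurePreserving (measurePreserving_eval (fun _ : Fin n => P) j)).const_smul
    (n : ℝ)⁻¹

variable [CompleteSpace H]

theorem integral_norm_sub_integral_sq {α : Type*} [MeasurableSpace α] {μ : Measure α}
    [IsProbabilityMeasure μ] {f : α → H} (hf : MemLp f 2 μ) :
    ∫ a, ‖f a - ∫ b, f b ∂μ‖ ^ 2 ∂μ = ∫ a, ‖f a‖ ^ 2 ∂μ - ‖∫ a, f a ∂μ‖ ^ 2 := by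
  set m := ∫ b, f b ∂μ
  have hsq : Integrable (fun a => ‖f a‖ ^ 2) μ := (memLp_two_iff_integrable_sq_norm hf.1).1 hf
  have hinner : Integrable (fun a => 2 * ⟪f a, m⟫) μ :=
    ((hf.integrable one_le_two).inner_const m).const_mul 2
  have hmean : ∫ a, ⟪f a, m⟫ ∂μ = ‖m‖ ^ 2 := by
    simp_rw [real_inner_comm m]
    rw [integral_inner (hf.integrable one_le_two), real_inner_self_eq_norm_sq]
  simp_rw [norm_sub_sq_real]
  rw [integral_add (f := fun a => ‖f a‖ ^ 2 - 2 * ⟪f a, m⟫) (hsq.sub hinner) (integrable_const _),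
    integral_sub hsq hinner, integral_const_mul, hmean]
  simp only [integral_const, probReal_univ, smul_eq_mul, one_mul]
  ring

theorem sq_norm_integral_le_integral_sq_norm {α : Type*} [MeasurableSpace α] {μ : Measure α}
    [IsProbabilityMeasure μ] {f : α → H} (hf : MemLp f 2 μ) :
    ‖∫ a, f a ∂μ‖ ^ 2 ≤ ∫ a, ‖f a‖ ^ 2 ∂μ := by
  have := integral_norm_sub_integral_sq hf ▸
    integral_nonneg fun a => sq_nonneg ‖f a - ∫ b, f b ∂μ‖
  linarith

theorem integral_norm_sum_sq_pi {ι : Type*} [Fintype ι] {α : ι → Type*}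
    [∀ i, MeasurableSpace (α i)] {μ : ∀ i, Measure (α i)} [∀ i, IsProbabilityMeasure (μ i)]
    {Y : ∀ i, α i → H} (hY : ∀ i, MemLp (Y i) 2 (μ i)) (hY₀ : ∀ i, ∫ a, Y i a ∂μ i = 0) :
    ∫ x, ‖∑ i, Y i (x i)‖ ^ 2 ∂Measure.pi μ = ∑ i, ∫ a, ‖Y i a‖ ^ 2 ∂μ i := by
  have hev : ∀ i, MeasurePreserving (fun x : ∀ i, α i => x i) (Measure.pi μ) (μ i) :=
    measurePreserving_eval μ
  have hint : ∀ i j, Integrable (fun x : ∀ i, α i => ⟪Y i (x i), Y j (x j)⟫) (Measure.pi μ) :=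
    fun i j => ((hY i).comp_measurePreserving (hev i)).integrable_inner
      ((hY j).comp_measurePreserving (hev j))
  have hcross : ∀ i j, i ≠ j → ∫ x, ⟪Y i (x i), Y j (x j)⟫ ∂Measure.pi μ = 0 := by
    intro i j hij
    have hindep : IndepFun (fun x : ∀ i, α i => x i) (fun x => x j) (Measure.pi μ) :=
      (iIndepFun_pi (μ := μ) (X := fun _ => id) fun _ => aemeasurable_id).indepFun hij
    refine (hindep.integral_bilin_comp_comp (hev i).measurable.aemeasurable
      (hev j).measurable.aemeasurable (by rw [(hev i).map_eq]; exact (hY i).integrable one_le_two)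
      (by rw [(hev j).map_eq]; exact (hY j).integrable one_le_two) (innerSL ℝ)).trans ?_
    rw [innerSL_apply_apply, integral_comp_eval (hY i).1, hY₀, inner_zero_left]
  have hdiag : ∀ i, ∫ x, ⟪Y i (x i), Y i (x i)⟫ ∂Measure.pi μ = ∫ a, ‖Y i a‖ ^ 2 ∂μ i := by
    intro i
    simp_rw [real_inner_self_eq_norm_sq]
    exact integral_comp_eval ((memLp_two_iff_integrable_sq_norm (hY i).1).1 (hY i)).1
  calc ∫ x, ‖∑ i, Y i (x i)‖ ^ 2 ∂Measure.pi μ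
      = ∫ x, ∑ i, ∑ j, ⟪Y i (x i), Y j (x j)⟫ ∂Measure.pi μ := by
        simp_rw [← real_inner_self_eq_norm_sq, sum_inner, inner_sum]
    _ = ∑ i, ∑ j, ∫ x, ⟪Y i (x i), Y j (x j)⟫ ∂Measure.pi μ := by
        rw [integral_finsetSum _ fun i _ => integrable_finsetSum _ fun j _ => hint i j]
        exact Finset.sum_congr rfl fun i _ => integral_finsetSum _ fun j _ => hint i j
    _ = ∑ i, ∫ a, ‖Y i a‖ ^ 2 ∂μ i := Finset.sum_congr rfl fun i _ => by
        rw [Finset.sum_eq_single i (fun j _ hji => hcross i j hji.symm) (by simp), hdiag]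

theorem integral_norm_empEmb_sub_sq {Ξ : Type*} [MeasurableSpace Ξ] {P : Measure Ξ}
    [IsProbabilityMeasure P] {φ : Ξ → H} (hφ : MemLp φ 2 P) {n : ℕ} (hn : n ≠ 0) :
    ∫ x, ‖empEmb φ x - ∫ ξ, φ ξ ∂P‖ ^ 2 ∂Measure.pi (fun _ : Fin n => P) =
      (∫ ξ, ‖φ ξ‖ ^ 2 ∂P - ‖∫ ξ, φ ξ ∂P‖ ^ 2) / n := by
  rw [← integral_norm_sub_integral_sq hφ]
  set m := ∫ ξ, φ ξ ∂P
  have hcenter : ∀ x : Fin n → Ξ, empEmb φ x - m = (n : ℝ)⁻¹ • ∑ j, (φ (x j) - m) := by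
    intro x
    rw [empEmb, Finset.sum_sub_distrib, smul_sub, Finset.sum_const, Finset.card_univ, Fintype.card_fin,
      ← Nat.cast_smul_eq_nsmul ℝ, smul_smul, inv_mul_cancel₀ (by exact_mod_cast hn), one_smul]
  have hY₀ : ∫ ξ, (φ ξ - m) ∂P = 0 := by
    rw [integral_sub (hφ.integrable one_le_two) (integrable_const m)]
    simp [m]
  have hsum := integral_norm_sum_sq_pi (μ := fun _ : Fin n => P) (Y := fun _ ξ => φ ξ - m)
    (fun _ => hφ.sub (memLp_const m)) fun _ => hY₀
  simp_rw [hcenter, norm_smul, mul_pow]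
  rw [integral_const_mul, hsum, Finset.sum_const, Finset.card_univ, Fintype.card_fin,
    nsmul_eq_mul, norm_inv, Real.norm_natCast]
  field_simp

end InnerProductSpace

section Pi

variable {ι : Type*} [Fintype ι] {α : ι → Type*} [∀ i, MeasurableSpace (α i)]
  {μ : ∀ i, Measure (α i)} {E : Type*} [NormedAddCommGroup E] {f : ∀ i, α i → E}

theorem integrable_sum_comp_eval [∀ i, IsFiniteMeasure (μ i)]
    (hf : ∀ i, Integrable (f i) (μ i)) :
    Integrable (fun x => ∑ i, f i (x i)) (Measure.pi μ) :=
  integrable_finsetSum _ fun i _ => integrable_comp_eval (hf i)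

theorem integral_sum_comp_eval [NormedSpace ℝ E] [∀ i, IsProbabilityMeasure (μ i)]
    (hf : ∀ i, Integrable (f i) (μ i)) :
    ∫ x, ∑ i, f i (x i) ∂Measure.pi μ = ∑ i, ∫ a, f i a ∂μ i := by
  rw [integral_finsetSum _ fun i _ => integrable_comp_eval (hf i)]
  exact Finset.sum_congr rfl fun i _ => integral_comp_eval (hf i).1

end Pi

/-- **Second-moment bound for the empirical Gram matrix.**
There exists a universal constant `B > 0` such that, for any multi-source setup,
`E[‖K̂ − K‖₂²] ≤ C²·(8M/n̄ + B/n̄²)`, the expectation being over the `M` mutually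
independent datasets. -/
theorem empirical_gram_matrix_second_moment_bound :
    ∃ B : ℝ, 0 < B ∧
      ∀ (H : Type u) (Ξ : Type v)
        [NormedAddCommGroup H] [InnerProductSpace ℝ H] [CompleteSpace H]
        [MeasurableSpace Ξ]
        (C : ℝ), 0 < C →
        ∀ (φ : Ξ → H), StronglyMeasurable φ → (∀ ξ, ‖φ ξ‖ ^ 2 ≤ C) →
        ∀ (M : ℕ), 0 < M →
        ∀ (P : Fin M → Measure Ξ) [∀ i, IsProbabilityMeasure (P i)]
          (n : Fin M → ℕ), (∀ i, 0 < n i) →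
        ∀ (μ : Fin M → H), (∀ i, μ i = ∫ ξ, φ ξ ∂(P i)) →
        ∀ (nbar : ℝ), nbar = (∑ i, (1 : ℝ) / n i)⁻¹ →
        ∫ x : (i : Fin M) → Fin (n i) → Ξ,
            spectralNorm2 (gram (fun i => empEmb φ (x i)) - gram μ) ^ 2
            ∂(Measure.pi fun i => Measure.pi fun _ : Fin (n i) => P i) ≤
          C ^ 2 * (8 * M / nbar + B / nbar ^ 2) := by
  refine ⟨1, one_pos, ?_⟩
  intro H Ξ _ _ _ _ C hC φ hφm hφC M _ P _ n hn μ hμ nbar hnbar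
  have hφs : ∀ ξ, ‖φ ξ‖ ≤ √C := fun ξ => (Real.le_sqrt (norm_nonneg _) hC.le).2 (hφC ξ)
  have hφ : ∀ i, MemLp φ 2 (P i) := fun i =>
    MemLp.of_bound hφm.aestronglyMeasurable (√C) (ae_of_all _ hφs)
  have hφ2 : ∀ i, ∫ ξ, ‖φ ξ‖ ^ 2 ∂P i ≤ C := fun i => by
    simpa using integral_mono ((memLp_two_iff_integrable_sq_norm (hφ i).1).1 (hφ i))
      (integrable_const C) hφC
  have hμC : ∀ i, ‖μ i‖ ^ 2 ≤ C := fun i =>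
    hμ i ▸ (sq_norm_integral_le_integral_sq_norm (hφ i)).trans (hφ2 i)
  have hembC : ∀ {k : ℕ} (y : Fin k → Ξ), ‖empEmb φ y‖ ^ 2 ≤ C := fun y =>
    (Real.le_sqrt (norm_nonneg _) hC.le).1 (norm_empEmb_le (Real.sqrt_nonneg C) hφs y)
  have hint : ∀ i, Integrable (fun y : Fin (n i) → Ξ => ‖empEmb φ y - μ i‖ ^ 2)
      (Measure.pi fun _ => P i) := fun i =>
    have hL := (memLp_empEmb (hφ i) (n i)).sub (memLp_const (μ i))
    (memLp_two_iff_integrable_sq_norm hL.1).1 hL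
  calc _ ≤ ∫ x : (i : Fin M) → Fin (n i) → Ξ, 4 * C * M * ∑ i, ‖empEmb φ (x i) - μ i‖ ^ 2
          ∂(Measure.pi fun i => Measure.pi fun _ : Fin (n i) => P i) :=
        integral_mono_of_nonneg (ae_of_all _ fun _ => sq_nonneg _)
          ((integrable_sum_comp_eval hint).const_mul _)
          (ae_of_all _ fun x => spectralNorm2_gram_sub_sq_le (fun i => hembC (x i)) hμC)
    _ ≤ 4 * C * M * ∑ i, C / n i := by
        rw [integral_const_mul, integral_sum_comp_eval hint]
        gcongr with i
        rw [hμ i, integral_norm_empEmb_sub_sq (hφ i) (hn i).ne']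
        gcongr
        linarith [hφ2 i, sq_nonneg ‖∫ ξ, φ ξ ∂P i‖]
    _ ≤ C ^ 2 * (8 * M / nbar + 1 / nbar ^ 2) := by
        simp only [hnbar, div_inv_eq_mul, inv_pow, one_div, ← Finset.mul_sum, div_eq_mul_inv C]
        have hS : 0 ≤ ∑ i, ((n i : ℝ))⁻¹ := by positivity
        nlinarith [mul_nonneg (mul_nonneg (sq_nonneg C) (Nat.cast_nonneg M)) hS,
          mul_nonneg (sq_nonneg C) (sq_nonneg (∑ i, ((n i : ℝ))⁻¹))]
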